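/- For the R-matrix of U_q(sl₂) on V₁ ⊗ V₁, no scalar multiple g(q)·(flip ∘ R), g(q) ∈ C(q^{1/2}), maps the crystal lattice L = Span_A{v₁⊗v₁, v₋₁⊗v₁, v₁⊗v₋₁, v₋₁⊗v₋₁} into itself and induces an isomorphism on L/q^{−1/2}L. -/

import Mathlib

noncomputable section

/-- The formal variable `q^{1/2}`, realized as the generator `X` of `ℂ(q^{1/2})`. -/
def s : RatFunc ℂ := RatFunc.X

/-- The quantum parameter `q = (q^{1/2})²`. -/
def qq : RatFunc ℂ := RatFunc.X ^ 2

set_option synthInstance.maxHeartbeats 800000 in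
/-- The matrix of `flip ∘ R` on `V₁ ⊗ V₁` in the ordered tensor basis
`{v₁⊗v₁, v₋₁⊗v₁, v₁⊗v₋₁, v₋₁⊗v₋₁}`. -/
def flipR : Matrix (Fin 4) (Fin 4) (RatFunc ℂ) :=
  s⁻¹ • !![qq, 0, 0, 0; 0, qq - qq⁻¹, 1, 0; 0, 1, 0, 0; 0, 0, 0, qq]

/-- The ring `A` of rational functions in `ℂ(q^{1/2})` that are regular at `q = ∞`. -/
def Areg : Set (RatFunc ℂ) :=
  {f | ∃ p r : Polynomial ℂ, r ≠ 0 ∧ p.natDegree ≤ r.natDegree ∧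
    f = algebraMap (Polynomial ℂ) (RatFunc ℂ) p / algebraMap (Polynomial ℂ) (RatFunc ℂ) r}

/-! `A` is the valuation ring of the place at infinity of `ℂ(q^{1/2})`, so it is a subring
containing `q^{-1/2}` but not `q^{1/2}`. If `g·(flip ∘ R)` preserves `L`, the image of
`v₁⊗v₁` shows `q^{1/2} g ∈ A`. The only basis vector sent to a multiple of `v₁⊗v₋₁` is
`v₋₁⊗v₁`, with coefficient `q^{-1/2} g`. Lifting `v₁⊗v₋₁` modulo `q^{-1/2}L` to some `v ∈ L`
whose `v₋₁⊗v₁`-coordinate is `c ∈ A` then gives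
`q^{1/2} = (q^{1/2} g)(q^{-1/2} c) - q^{1/2}(q^{-1/2} g c - 1) ∈ A`, a contradiction. -/

open Polynomial WithZero

theorem RatFunc.inftyValuation_le_one_iff {K : Type*} [Field K] [DecidableEq (RatFunc K)]
    {f : RatFunc K} :
    RatFunc.inftyValuation K f ≤ 1 ↔ ∃ p r : K[X], r ≠ 0 ∧ p.natDegree ≤ r.natDegree ∧
      f = algebraMap K[X] (RatFunc K) p / algebraMap K[X] (RatFunc K) r := by
  constructor
  · intro hf
    refine ⟨f.num, f.denom, f.denom_ne_zero, ?_, f.num_div_denom.symm⟩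
    rcases eq_or_ne f 0 with rfl | hf0
    · simp
    rw [RatFunc.inftyValuation_apply, RatFunc.inftyValuation_of_nonzero _ hf0, ← exp_zero,
      exp_le_exp, RatFunc.intDegree] at hf
    omega
  · rintro ⟨p, r, hr, hdeg, rfl⟩
    rcases eq_or_ne p 0 with rfl | hp
    · simp
    rw [map_div₀, RatFunc.inftyValuation_apply, RatFunc.inftyValuation_apply,
      RatFunc.inftyValuation.polynomial _ hp, RatFunc.inftyValuation.polynomial _ hr,
      ← exp_sub, ← exp_zero, exp_le_exp]
    omega

open scoped Classical in
theorem Areg_eq_integer : Areg = ((RatFunc.inftyValuation ℂ).integer : Set (RatFunc ℂ)) :=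
  Set.ext fun _ => RatFunc.inftyValuation_le_one_iff.symm

open scoped Classical in
def AregSubring : Subring (RatFunc ℂ) :=
  (RatFunc.inftyValuation ℂ).integer.copy Areg Areg_eq_integer

theorem s_notMem_Areg : s ∉ Areg := by
  classical
  rw [Areg_eq_integer, SetLike.mem_coe, Valuation.mem_integer_iff, s, RatFunc.inftyValuation.X,
    ← exp_zero, exp_le_exp]
  exact Int.one_pos.not_ge

theorem s_inv_mem_Areg : s⁻¹ ∈ Areg := by
  classical
  rw [Areg_eq_integer, SetLike.mem_coe, Valuation.mem_integer_iff, s, map_inv₀,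
    RatFunc.inftyValuation.X, ← exp_neg, ← exp_zero, exp_le_exp]
  norm_num

theorem single_one_mem_Areg {ι : Type*} [DecidableEq ι] (i j : ι) :
    (Pi.single i 1 : ι → RatFunc ℂ) j ∈ Areg := by
  rcases eq_or_ne j i with rfl | hji
  · rw [Pi.single_eq_same]
    exact AregSubring.one_mem
  · rw [Pi.single_eq_of_ne hji]
    exact AregSubring.zero_mem

theorem s_inv_mul_qq : s⁻¹ * qq = s := by
  rw [qq, s, sq, inv_mul_cancel_left₀ RatFunc.X_ne_zero]

theorem flipR_mulVec_zero (v : Fin 4 → RatFunc ℂ) : (flipR.mulVec v) 0 = s * v 0 := by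
  simp [flipR, Matrix.mulVec, dotProduct, Fin.sum_univ_four, s_inv_mul_qq]

theorem flipR_mulVec_two (v : Fin 4 → RatFunc ℂ) : (flipR.mulVec v) 2 = s⁻¹ * v 1 := by
  simp [flipR, Matrix.mulVec, dotProduct, Fin.sum_univ_four]

set_option synthInstance.maxHeartbeats 800000 in
/-- No scalar multiple `g(q)·(flip ∘ R)`, `g(q) ∈ ℂ(q^{1/2})`, maps the crystal lattice
`L = Span_A{v₁⊗v₁, v₋₁⊗v₁, v₁⊗v₋₁, v₋₁⊗v₋₁}` into itself and induces an isomorphism on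
`L/q^{-1/2}L` (an element of `q^{-1/2}L` is a vector `v` with `s·vᵢ ∈ A` for all `i`;
inducing an isomorphism is expressed by surjectivity and injectivity modulo
`q^{-1/2}L`). -/
theorem no_scalar_multiple_of_flipR_preserves_lattice :
    ¬ ∃ g : RatFunc ℂ,
      (∀ v : Fin 4 → RatFunc ℂ, (∀ i, v i ∈ Areg) →
        ∀ i, (g • flipR).mulVec v i ∈ Areg) ∧
      (∀ w : Fin 4 → RatFunc ℂ, (∀ i, w i ∈ Areg) →
        ∃ v : Fin 4 → RatFunc ℂ, (∀ i, v i ∈ Areg) ∧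
          ∀ i, s * ((g • flipR).mulVec v i - w i) ∈ Areg) ∧
      (∀ v : Fin 4 → RatFunc ℂ, (∀ i, v i ∈ Areg) →
        (∀ i, s * ((g • flipR).mulVec v i) ∈ Areg) → ∀ i, s * v i ∈ Areg) := by
  rintro ⟨g, hpreserves, hsurj, -⟩
  have hgs : g * s ∈ Areg := by
    simpa only [Matrix.smul_mulVec, Pi.smul_apply, flipR_mulVec_zero, Pi.single_eq_same,
      mul_one, smul_eq_mul] using hpreserves (Pi.single 0 1) (single_one_mem_Areg 0) 0
  obtain ⟨v, hv, hv_image⟩ := hsurj (Pi.single 2 1) (single_one_mem_Areg 2)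
  have himage : s * (g * (s⁻¹ * v 1) - 1) ∈ Areg := by
    simpa only [Matrix.smul_mulVec, Pi.smul_apply, flipR_mulVec_two, Pi.single_eq_same,
      smul_eq_mul] using hv_image 2
  have hs_eq : s = g * s * (s⁻¹ * v 1) - s * (g * (s⁻¹ * v 1) - 1) := by ring
  refine s_notMem_Areg (hs_eq ▸ AregSubring.sub_mem ?_ himage)
  exact AregSubring.mul_mem hgs (AregSubring.mul_mem s_inv_mem_Areg (hv 1))
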